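/- Let p, q be integers with 1 ≤ p < q and assume p divides q. For every Britton-reduced valley word v there exist a standard valley V and an integer γ ∈ ℤ such that v and the concatenation V a^γ represent the same element of BS(p,q); moreover the word V a^γ is again Britton-reduced. -/

import Mathlib

inductive Letter : Type
  | a | A | t | T
  deriving DecidableEq

def bsRel (p q : ℤ) : Set (FreeGroup Bool) :=
  {FreeGroup.of true * (FreeGroup.of false) ^ p * (FreeGroup.of true)⁻¹ * (FreeGroup.of false) ^ (-q)}

abbrev BS (p q : ℤ) := PresentedGroup (bsRel p q)

def evalLetter (p q : ℤ) : Letter → BS p q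
  | .a => PresentedGroup.of false
  | .A => (PresentedGroup.of false)⁻¹
  | .t => PresentedGroup.of true
  | .T => (PresentedGroup.of true)⁻¹

def eval (p q : ℤ) (w : List Letter) : BS p q := (w.map (evalLetter p q)).prod

def aPow (α : ℤ) : List Letter :=
  if 0 ≤ α then List.replicate α.toNat Letter.a else List.replicate (-α).toNat Letter.A

def Geodesic (p q : ℤ) (w : List Letter) : Prop :=
  ∀ v : List Letter, eval p q v = eval p q w → w.length ≤ v.length

/-- Ranking of letters in the order `t < T < a < A`. -/
def letterIdx : Letter → ℕ
  | .t => 0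
  | .T => 1
  | .a => 2
  | .A => 3

/-- Length-lexicographical strict order on words, with letters ordered `t < T < a < A`. -/
def llLt (u v : List Letter) : Prop :=
  u.length < v.length ∨
    (u.length = v.length ∧ List.Lex (· < ·) (u.map letterIdx) (v.map letterIdx))

/-- `IsLlnf p q v w` : `v` is the length-lexicographical normal form of `w`,
i.e. `v` represents the same element as `w` and no word representing this element
precedes `v` in the length-lexicographical order. -/
def IsLlnf (p q : ℤ) (v w : List Letter) : Prop :=
  eval p q v = eval p q w ∧ ∀ u : List Letter, eval p q u = eval p q w → ¬ llLt u v

/-- A word contains no factors `a a⁻¹` or `a⁻¹ a`. -/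
def Reduced (w : List Letter) : Prop :=
  (∀ u v : List Letter, w ≠ u ++ [Letter.a, Letter.A] ++ v) ∧
  (∀ u v : List Letter, w ≠ u ++ [Letter.A, Letter.a] ++ v)

/-- A word is Britton-reduced: it has no factors `a a⁻¹`, `a⁻¹ a`,
`t a^{pμ} t⁻¹` or `t⁻¹ a^{qμ} t` (with `μ ∈ ℤ`). -/
def BrittonReduced (p q : ℤ) (w : List Letter) : Prop :=
  Reduced w ∧
  (∀ u v : List Letter, ∀ μ : ℤ, w ≠ u ++ [Letter.t] ++ aPow (p * μ) ++ [Letter.T] ++ v) ∧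
  (∀ u v : List Letter, ∀ μ : ℤ, w ≠ u ++ [Letter.T] ++ aPow (q * μ) ++ [Letter.t] ++ v)

/-- The t-sequence of a word: its subsequence of letters from `{t, t⁻¹}`. -/
def tSeq (w : List Letter) : List Letter :=
  w.filter (fun c => c == Letter.t || c == Letter.T)

/-- The geodesic length of a group element: the least length of a word representing it. -/
noncomputable def geodesicLength (p q : ℤ) (g : BS p q) : ℕ :=
  sInf {n : ℕ | ∃ w : List Letter, eval p q w = g ∧ w.length = n}

/-- A valley: every prefix has height `≤ 0` and the total height is `0`,
where the height of a prefix is (number of `t`'s) − (number of `t⁻¹`'s). -/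
def IsValley (w : List Letter) : Prop :=
  (∀ u v : List Letter, w = u ++ v → u.count Letter.t ≤ u.count Letter.T) ∧
  w.count Letter.t = w.count Letter.T


/-- A standard valley: a Britton-reduced valley of the form
`a^{α_1} θ_1 ⋯ a^{α_k} θ_k` with `|α_i| < q` for all `i` and `|α_i| < p` whenever
`θ_i = t⁻¹`. -/
def IsStandardValley (p q : ℤ) (V : List Letter) : Prop :=
  BrittonReduced p q V ∧ IsValley V ∧
  ∃ (k : ℕ) (αs : Fin k → ℤ) (θs : Fin k → Letter),
    (∀ i, θs i = Letter.t ∨ θs i = Letter.T) ∧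
    V = (List.ofFn fun i : Fin k => aPow (αs i) ++ [θs i]).flatten ∧
    (∀ i, |αs i| < q) ∧ (∀ i, θs i = Letter.T → |αs i| < p)

/-!
Write `v = a^α₁ θ₁ ⋯ a^αₖ θₖ a^γ`. Sweeping from left to right, split the exponent in front of
`θᵢ`, plus the carry coming from the left, as `r + m s` with `0 ≤ r < m`, where `m = q` in front
of `t` and `m = p` in front of `t⁻¹`, and move `a^(m s)` across `θᵢ` by `a^(q s) t = t a^(p s)`
and `a^(p s) t⁻¹ = t⁻¹ a^(q s)`. The t-sequence, hence the valley shape, is unchanged, and the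
remainders satisfy the bounds of a standard valley. For a word in this block form,
Britton-reducedness only forbids a block `(α, t⁻¹)` right after a `t` with `p ∣ α`, or a block
`(α, t)` right after a `t⁻¹` with `q ∣ α`. After such a change of direction the carry is a
multiple of exactly that modulus, so a remainder is divisible iff the original exponent was.
-/

lemma aPow_zero : aPow 0 = [] := by simp [aPow]

lemma aPow_add_one {α : ℤ} (hα : 0 ≤ α) : aPow (α + 1) = aPow α ++ [.a] := by
  simp only [aPow, hα, if_true, show 0 ≤ α + 1 by omega, ← List.replicate_succ']
  congr 1
  omega

lemma aPow_sub_one {α : ℤ} (hα : α ≤ 0) : aPow (α - 1) = aPow α ++ [.A] := by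
  unfold aPow
  rw [if_neg (by omega)]
  split_ifs with h
  · obtain rfl : α = 0 := by omega
    rfl
  · rw [← List.replicate_succ']
    congr 1
    omega

lemma mem_aPow {c : Letter} {α : ℤ} (hc : c ∈ aPow α) : c = .a ∨ c = .A := by
  unfold aPow at hc
  split at hc <;> simp_all [List.mem_replicate]

lemma count_a_sub_count_A_aPow (α : ℤ) :
    ((aPow α).count .a : ℤ) - (aPow α).count .A = α := by
  unfold aPow
  split <;> simp [List.count_replicate] <;> omega

lemma aPow_injective : Function.Injective aPow := fun α β h => by
  rw [← count_a_sub_count_A_aPow α, ← count_a_sub_count_A_aPow β, h]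

def tLetter : Bool → Letter
  | true => .t
  | false => .T

lemma tLetter_injective : Function.Injective tLetter := by
  intro b b' h
  cases b <;> cases b' <;> simp_all [tLetter]

lemma tLetter_eq_t_or_eq_T (b : Bool) : tLetter b = .t ∨ tLetter b = .T := by
  cases b <;> simp [tLetter]

/-- `a ^ modulus p q b` is the power of `a` that can be moved across `tLetter b`, turning into
`a ^ modulus p q !b`. -/
def modulus (p q : ℤ) (b : Bool) : ℤ := if b then q else p

lemma modulus_pos {p q : ℤ} (hp : 0 < p) (hq : 0 < q) (b : Bool) : 0 < modulus p q b := by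
  cases b <;> assumption

lemma modulus_le {p q : ℤ} (hpq : p ≤ q) (b : Bool) : modulus p q b ≤ q := by
  cases b <;> simp [modulus, hpq]

lemma eval_append (p q : ℤ) (u v : List Letter) :
    eval p q (u ++ v) = eval p q u * eval p q v := by
  simp [eval]

lemma eval_aPow (p q α : ℤ) :
    eval p q (aPow α) = (PresentedGroup.of false : BS p q) ^ α := by
  unfold aPow eval
  split
  · rw [List.map_replicate, List.prod_replicate, ← zpow_natCast, Int.toNat_of_nonneg ‹_›]
    rfl
  · rw [List.map_replicate, List.prod_replicate, evalLetter, inv_pow, ← zpow_natCast,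
      Int.toNat_of_nonneg (by omega), ← zpow_neg, neg_neg]

lemma t_mul_a_zpow_mul_t_inv (p q : ℤ) :
    (PresentedGroup.of true : BS p q) * (PresentedGroup.of false) ^ p *
      (PresentedGroup.of true)⁻¹ = (PresentedGroup.of false) ^ q := by
  have h := PresentedGroup.one_of_mem (rels := bsRel p q) (Set.mem_singleton _)
  simp only [map_mul, map_inv, map_zpow] at h
  rwa [zpow_neg, mul_inv_eq_one] at h

lemma a_zpow_modulus_mul_eval_tLetter (p q s : ℤ) (b : Bool) :
    (PresentedGroup.of false : BS p q) ^ (modulus p q b * s) * eval p q [tLetter b] =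
      eval p q [tLetter b] * (PresentedGroup.of false) ^ (modulus p q (!b) * s) := by
  have h : (PresentedGroup.of true : BS p q) * (PresentedGroup.of false) ^ (p * s) *
      (PresentedGroup.of true)⁻¹ = (PresentedGroup.of false) ^ (q * s) := by
    rw [zpow_mul, zpow_mul, ← conj_zpow, t_mul_a_zpow_mul_t_inv]
  cases b <;> simp only [modulus, eval, tLetter, evalLetter, List.map_cons, List.map_nil,
    List.prod_cons, List.prod_nil, mul_one, Bool.not_true, Bool.not_false, if_true,
    Bool.false_eq_true, if_false] <;> rw [← h] <;> group

def blocksWord (bs : List (ℤ × Bool)) : List Letter :=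
  bs.flatMap fun x => aPow x.1 ++ [tLetter x.2]

@[simp]
lemma blocksWord_nil : blocksWord [] = [] := rfl

@[simp]
lemma blocksWord_cons (x : ℤ × Bool) (bs : List (ℤ × Bool)) :
    blocksWord (x :: bs) = aPow x.1 ++ tLetter x.2 :: blocksWord bs := by
  simp [blocksWord]

@[simp]
lemma blocksWord_append (bs₁ bs₂ : List (ℤ × Bool)) :
    blocksWord (bs₁ ++ bs₂) = blocksWord bs₁ ++ blocksWord bs₂ := by
  simp [blocksWord]

/-- `c` is the carry, the power of `a` entering from the left; `γ` is the trailing exponent. -/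
def normalizeBlocks (p q : ℤ) : ℤ → List (ℤ × Bool) → ℤ → List (ℤ × Bool) × ℤ
  | c, [], γ => ([], c + γ)
  | c, (α, b) :: bs, γ =>
    let N := normalizeBlocks p q (modulus p q (!b) * ((c + α) / modulus p q b)) bs γ
    (((c + α) % modulus p q b, b) :: N.1, N.2)

lemma eval_normalizeBlocks (p q : ℤ) :
    ∀ (c : ℤ) (bs : List (ℤ × Bool)) (γ : ℤ),
      eval p q (aPow c ++ blocksWord bs ++ aPow γ) =
        eval p q (blocksWord (normalizeBlocks p q c bs γ).1 ++ aPow (normalizeBlocks p q c bs γ).2)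
  | c, [], γ => by simp [normalizeBlocks, eval_append, eval_aPow, zpow_add]
  | c, (α, b) :: bs, γ => by
    simp only [normalizeBlocks, blocksWord_cons, List.append_assoc, List.cons_append]
    rw [← List.singleton_append, ← List.singleton_append (l := blocksWord _ ++ _)]
    set m := modulus p q b
    set s := (c + α) / m
    have ih := eval_normalizeBlocks p q (modulus p q (!b) * s) bs γ
    have hsplit : (PresentedGroup.of false : BS p q) ^ c * (PresentedGroup.of false) ^ α =
        (PresentedGroup.of false) ^ ((c + α) % m) * (PresentedGroup.of false) ^ (m * s) := by
      rw [← zpow_add, ← zpow_add, Int.emod_add_mul_ediv]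
    simp only [eval_append, eval_aPow, List.append_assoc] at ih
    simp only [eval_append, eval_aPow, ← ih]
    rw [← mul_assoc (_ ^ c), hsplit, mul_assoc, ← mul_assoc (_ ^ (m * s)),
      a_zpow_modulus_mul_eval_tLetter, mul_assoc]

lemma map_snd_normalizeBlocks (p q : ℤ) :
    ∀ (c : ℤ) (bs : List (ℤ × Bool)) (γ : ℤ),
      (normalizeBlocks p q c bs γ).1.map Prod.snd = bs.map Prod.snd
  | _, [], _ => rfl
  | _, (_, _) :: bs, _ => by simp [normalizeBlocks, map_snd_normalizeBlocks p q _ bs]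

lemma normalizeBlocks_bounds {p q : ℤ} (hp : 0 < p) (hq : 0 < q) :
    ∀ (c : ℤ) (bs : List (ℤ × Bool)) (γ : ℤ),
      ∀ x ∈ (normalizeBlocks p q c bs γ).1, 0 ≤ x.1 ∧ x.1 < modulus p q x.2
  | _, [], _ => by simp [normalizeBlocks]
  | c, (α, b) :: bs, γ => by
    simp only [normalizeBlocks, List.mem_cons, forall_eq_or_imp]
    have hm := modulus_pos hp hq b
    exact ⟨⟨Int.emod_nonneg _ hm.ne', Int.emod_lt_of_pos _ hm⟩, normalizeBlocks_bounds hp hq _ bs γ⟩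

/-- The blocks `(β, b)`, `(α, b')` in succession do not create a pinch `θ_b a^α θ_b⁻¹`. -/
def NoPinch (p q : ℤ) (x y : ℤ × Bool) : Prop :=
  y.2 = !x.2 → ¬ modulus p q y.2 ∣ y.1

lemma isChain_noPinch_normalizeBlocks {p q : ℤ} :
    ∀ {c : ℤ} {bs : List (ℤ × Bool)} (γ : ℤ),
      bs.IsChain (NoPinch p q) → (normalizeBlocks p q c bs γ).1.IsChain (NoPinch p q)
  | _, [], _, _ => .nil
  | _, [_], _, _ => .singleton _
  | c, (α, b) :: (β, b') :: bs, γ, h => by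
    rw [List.isChain_cons_cons] at h
    have ih := isChain_noPinch_normalizeBlocks (c := modulus p q (!b) * ((c + α) / modulus p q b))
      γ h.2
    simp only [normalizeBlocks] at ih ⊢
    refine List.isChain_cons_cons.2 ⟨fun hb hdvd => h.1 hb ?_, ih⟩
    subst hb
    rwa [Int.dvd_iff_emod_eq_zero, Int.emod_emod_of_dvd _ dvd_rfl, ← Int.dvd_iff_emod_eq_zero,
      dvd_add_right (dvd_mul_right _ _)] at hdvd

lemma List.append_cons_eq_append_cons_cases {α : Type*} {P : α → Prop} {m u r s : List α}
    {x y : α} (hm : ∀ z ∈ m, ¬ P z) (hy : P y) (h : m ++ x :: r = u ++ y :: s) :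
    (u = m ∧ x = y ∧ r = s) ∨ ∃ u', u = m ++ x :: u' ∧ r = u' ++ y :: s := by
  induction m generalizing u with
  | nil =>
    cases u with
    | nil => simp_all
    | cons z u' => simp only [List.nil_append, List.cons_append, List.cons.injEq] at h; simp_all
  | cons z m ih =>
    cases u with
    | nil =>
      simp only [List.nil_append, List.cons_append, List.cons.injEq] at h
      exact absurd (h.1 ▸ hy) (hm z (by simp))
    | cons w u' =>
      simp only [List.cons_append, List.cons.injEq] at h
      obtain ⟨rfl, h⟩ := h
      rcases ih (fun z hz => hm z (by simp [hz])) h with ⟨rfl, rfl, rfl⟩ | ⟨u'', rfl, rfl⟩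
      · exact .inl ⟨rfl, rfl, rfl⟩
      · exact .inr ⟨u'', rfl, rfl⟩

lemma not_mem_range_tLetter_of_mem_aPow {c : Letter} {α : ℤ} (hc : c ∈ aPow α) :
    c ∉ Set.range tLetter := by
  rintro ⟨b, rfl⟩
  cases b <;> simpa [tLetter] using mem_aPow hc

lemma tLetter_not_mem_aPow (b : Bool) (α : ℤ) : tLetter b ∉ aPow α :=
  fun h => not_mem_range_tLetter_of_mem_aPow h ⟨b, rfl⟩

lemma eq_cons_of_blocksWord_append_aPow_eq {bs : List (ℤ × Bool)} {γ β : ℤ} {b : Bool}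
    {w : List Letter} (h : blocksWord bs ++ aPow γ = aPow β ++ tLetter b :: w) :
    ∃ bs', bs = (β, b) :: bs' ∧ w = blocksWord bs' ++ aPow γ := by
  cases bs with
  | nil =>
    have : tLetter b ∈ blocksWord [] ++ aPow γ := by rw [h]; simp
    simp [tLetter_not_mem_aPow] at this
  | cons x bs =>
    simp only [blocksWord_cons, List.append_assoc, List.cons_append] at h
    rcases List.append_cons_eq_append_cons_cases (fun _ => not_mem_range_tLetter_of_mem_aPow)
      ⟨b, rfl⟩ h with ⟨hβ, hb, rfl⟩ | ⟨u', hu', -⟩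
    · exact ⟨bs, by rw [aPow_injective hβ, ← tLetter_injective hb], rfl⟩
    · have : tLetter x.2 ∈ aPow β := by simp [hu']
      exact absurd this (tLetter_not_mem_aPow x.2 β)

lemma exists_eq_append_cons_cons_of_blocksWord_append_aPow_eq {γ β : ℤ} {b b' : Bool}
    {v : List Letter} : ∀ {bs : List (ℤ × Bool)} {u : List Letter},
      blocksWord bs ++ aPow γ = u ++ tLetter b :: (aPow β ++ tLetter b' :: v) →
      ∃ bs₁ α bs₂, bs = bs₁ ++ (α, b) :: (β, b') :: bs₂
  | [], _, h => by
    have : tLetter b ∈ blocksWord [] ++ aPow γ := by rw [h]; simp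
    simp [tLetter_not_mem_aPow] at this
  | (α, b₀) :: bs, u, h => by
    simp only [blocksWord_cons, List.append_assoc, List.cons_append] at h
    rcases List.append_cons_eq_append_cons_cases (fun _ => not_mem_range_tLetter_of_mem_aPow)
      ⟨b, rfl⟩ h with ⟨-, hb, h⟩ | ⟨u', -, h⟩
    · obtain ⟨bs', rfl, -⟩ := eq_cons_of_blocksWord_append_aPow_eq h
      exact ⟨[], α, bs', by rw [tLetter_injective hb]; rfl⟩
    · obtain ⟨bs₁, α', bs₂, rfl⟩ := exists_eq_append_cons_cons_of_blocksWord_append_aPow_eq h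
      exact ⟨(α, b₀) :: bs₁, α', bs₂, rfl⟩

def NotCancelling (x y : Letter) : Prop :=
  ¬ (x = .a ∧ y = .A) ∧ ¬ (x = .A ∧ y = .a)

lemma reduced_of_isChain {w : List Letter}
    (h : w.IsChain NotCancelling) : Reduced w := by
  have hrel := List.isChain_iff_forall_rel_of_append_cons_cons.1 h
  exact ⟨fun u v hw => (hrel (l₁ := u) (l₂ := v) (by simp [hw])).1 ⟨rfl, rfl⟩,
    fun u v hw => (hrel (l₁ := u) (l₂ := v) (by simp [hw])).2 ⟨rfl, rfl⟩⟩

lemma isChain_aPow (α : ℤ) :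
    (aPow α).IsChain NotCancelling := by
  unfold aPow
  split <;> exact List.isChain_replicate_of_rel _ (by simp [NotCancelling])

lemma isChain_blocksWord_append_aPow (bs : List (ℤ × Bool)) (γ : ℤ) :
    (blocksWord bs ++ aPow γ).IsChain NotCancelling := by
  induction bs with
  | nil => simpa using isChain_aPow γ
  | cons x bs ih =>
    rw [blocksWord_cons, List.append_assoc, List.cons_append, List.isChain_split]
    refine ⟨List.isChain_append.2 ⟨isChain_aPow _, .singleton _, ?_⟩,
      List.isChain_cons.2 ⟨?_, ih⟩⟩
    all_goals cases x.2 <;> simp [NotCancelling, tLetter]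

lemma brittonReduced_iff {p q : ℤ} {w : List Letter} :
    BrittonReduced p q w ↔ Reduced w ∧ ∀ (b : Bool) (u v : List Letter) (μ : ℤ),
      w ≠ u ++ tLetter b :: (aPow (modulus p q (!b) * μ) ++ tLetter (!b) :: v) := by
  simp only [BrittonReduced, Bool.forall_bool, modulus, tLetter, Bool.not_false, Bool.not_true,
    if_true, Bool.false_eq_true, if_false, List.append_assoc, List.cons_append, List.nil_append,
    and_comm (a := ∀ _ _ _, w ≠ _ ++ Letter.T :: _)]

lemma brittonReduced_blocksWord_append_aPow_iff {p q γ : ℤ} {bs : List (ℤ × Bool)} :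
    BrittonReduced p q (blocksWord bs ++ aPow γ) ↔ bs.IsChain (NoPinch p q) := by
  rw [brittonReduced_iff, List.isChain_iff_forall_rel_of_append_cons_cons]
  constructor
  · rintro ⟨-, h⟩ ⟨β, b⟩ ⟨α, b'⟩ l₁ l₂ rfl hb ⟨μ, hμ⟩
    simp only at hb hμ
    subst hb hμ
    exact h b (blocksWord l₁ ++ aPow β) (blocksWord l₂ ++ aPow γ) μ (by simp)
  · intro h
    refine ⟨reduced_of_isChain (isChain_blocksWord_append_aPow bs γ), fun b u v μ hw => ?_⟩
    obtain ⟨bs₁, α, bs₂, rfl⟩ := exists_eq_append_cons_cons_of_blocksWord_append_aPow_eq hw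
    exact h rfl rfl (dvd_mul_right _ _)

lemma reduced_of_append {x y : List Letter} (h : Reduced (x ++ y)) : Reduced x :=
  ⟨fun u v hx => h.1 u (v ++ y) (by simp [hx]), fun u v hx => h.2 u (v ++ y) (by simp [hx])⟩

lemma exists_blocksWord_append_aPow_eq {w : List Letter} (hw : Reduced w) :
    ∃ bs γ, blocksWord bs ++ aPow γ = w := by
  induction w using List.reverseRecOn with
  | nil => exact ⟨[], 0, by simp [aPow_zero]⟩
  | append_singleton w c ih =>
    obtain ⟨bs, γ, rfl⟩ := ih (reduced_of_append hw)
    cases c with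
    | a =>
      refine ⟨bs, γ + 1, ?_⟩
      rcases le_or_gt 0 γ with hγ | hγ
      · rw [aPow_add_one hγ, List.append_assoc]
      · have hA : aPow γ = aPow (γ + 1) ++ [.A] := by
          rw [← aPow_sub_one (by omega), add_sub_cancel_right]
        exact absurd hw fun h => h.2 (blocksWord bs ++ aPow (γ + 1)) [] (by simp [hA])
    | A =>
      refine ⟨bs, γ - 1, ?_⟩
      rcases le_or_gt γ 0 with hγ | hγ
      · rw [aPow_sub_one hγ, List.append_assoc]
      · have ha : aPow γ = aPow (γ - 1) ++ [.a] := by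
          rw [← aPow_add_one (by omega), sub_add_cancel]
        exact absurd hw fun h => h.1 (blocksWord bs ++ aPow (γ - 1)) [] (by simp [ha])
    | t => exact ⟨bs ++ [(γ, true)], 0, by simp [aPow_zero, tLetter]⟩
    | T => exact ⟨bs ++ [(γ, false)], 0, by simp [aPow_zero, tLetter]⟩

lemma tSeq_append (u v : List Letter) : tSeq (u ++ v) = tSeq u ++ tSeq v :=
  List.filter_append _ _

lemma tSeq_aPow (α : ℤ) : tSeq (aPow α) = [] := by
  rw [tSeq, List.filter_eq_nil_iff]
  intro c hc
  rcases mem_aPow hc with rfl | rfl <;> decide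

lemma tSeq_blocksWord (bs : List (ℤ × Bool)) :
    tSeq (blocksWord bs) = (bs.map Prod.snd).map tLetter := by
  induction bs with
  | nil => rfl
  | cons x bs ih =>
    obtain ⟨α, b⟩ := x
    rw [blocksWord_cons, tSeq_append, tSeq_aPow, tSeq, List.filter_cons, ← tSeq, ih]
    cases b <;> rfl

lemma count_tSeq {c : Letter} (hc : c = .t ∨ c = .T) (w : List Letter) :
    (tSeq w).count c = w.count c :=
  List.count_filter (by rcases hc with rfl | rfl <;> rfl)

lemma IsValley.of_tSeq_eq {w w' : List Letter} (hw : IsValley w) (h : tSeq w' = tSeq w) :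
    IsValley w' := by
  have ht := count_tSeq (c := .t) (Or.inl rfl)
  have hT := count_tSeq (c := .T) (Or.inr rfl)
  refine ⟨fun u v hu => ?_, by rw [← ht, ← hT, h, ht, hT]; exact hw.2⟩
  have hpre : tSeq u <+: tSeq w := h ▸ hu ▸ (List.prefix_append u v).filter _
  obtain ⟨u₀, ⟨v₀, hu₀⟩, hu₀'⟩ := List.prefix_filter_iff.1 hpre
  rw [← ht, ← hT, show tSeq u = tSeq u₀ from hu₀', ht, hT]
  exact hw.1 u₀ v₀ hu₀.symm

lemma isStandardValley_blocksWord {p q : ℤ} (hpq : p ≤ q) {bs : List (ℤ × Bool)}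
    (hchain : bs.IsChain (NoPinch p q)) (hbounds : ∀ x ∈ bs, 0 ≤ x.1 ∧ x.1 < modulus p q x.2)
    (hv : IsValley (blocksWord bs)) : IsStandardValley p q (blocksWord bs) := by
  have hbr := brittonReduced_blocksWord_append_aPow_iff (γ := 0) |>.2 hchain
  rw [aPow_zero, List.append_nil] at hbr
  have habs (i : Fin bs.length) : |bs[(i : ℕ)].1| < modulus p q bs[(i : ℕ)].2 := by
    obtain ⟨h0, hlt⟩ := hbounds _ (List.getElem_mem i.2)
    rwa [abs_of_nonneg h0]
  refine ⟨hbr, hv, bs.length, fun i => bs[(i : ℕ)].1, fun i => tLetter bs[(i : ℕ)].2,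
    fun i => tLetter_eq_t_or_eq_T _, ?_, fun i => (habs i).trans_le (modulus_le hpq _),
    fun i hi => ?_⟩
  · rw [blocksWord, List.flatMap_def, ← List.ofFn_getElem_eq_map]
  · have hT : bs[(i : ℕ)].2 = false := tLetter_injective hi
    simpa [hT, modulus] using habs i

theorem britton_reduced_valley_standard_form_general (p q : ℤ) (hp : 1 ≤ p) (hpq : p < q)
    (v : List Letter) (hbr : BrittonReduced p q v) (hv : IsValley v) :
    ∃ (V : List Letter) (γ : ℤ),
      IsStandardValley p q V ∧ eval p q v = eval p q (V ++ aPow γ) ∧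
      BrittonReduced p q (V ++ aPow γ) := by
  obtain ⟨bs, γ, rfl⟩ := exists_blocksWord_append_aPow_eq hbr.1
  have hchain := brittonReduced_blocksWord_append_aPow_iff.1 hbr
  set N := normalizeBlocks p q 0 bs γ
  have hNchain : N.1.IsChain (NoPinch p q) := isChain_noPinch_normalizeBlocks γ hchain
  have htSeq : tSeq (blocksWord N.1) = tSeq (blocksWord bs ++ aPow γ) := by
    rw [tSeq_append, tSeq_aPow, List.append_nil, tSeq_blocksWord, tSeq_blocksWord,
      map_snd_normalizeBlocks]
  refine ⟨blocksWord N.1, N.2, ?_, ?_, brittonReduced_blocksWord_append_aPow_iff.2 hNchain⟩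
  · exact isStandardValley_blocksWord hpq.le hNchain
      (normalizeBlocks_bounds (by omega) (by omega) 0 bs γ) (hv.of_tSeq_eq htSeq)
  · simpa [aPow_zero] using eval_normalizeBlocks p q 0 bs γ

theorem britton_reduced_valley_standard_form (p q : ℤ) (hp : 1 ≤ p) (hpq : p < q)
    (hdvd : p ∣ q) (v : List Letter) (hbr : BrittonReduced p q v) (hv : IsValley v) :
    ∃ (V : List Letter) (γ : ℤ),
      IsStandardValley p q V ∧ eval p q v = eval p q (V ++ aPow γ) ∧
      BrittonReduced p q (V ++ aPow γ) :=
  britton_reduced_valley_standard_form_general p q hp hpq v hbr hv
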